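/- arXiv:2405.05268 — 4 statements merged into one kernel-verified Lean document; each statement's English description precedes it below -/
import Mathlib

section
/- For every integer k ≥ 1 and every positive integer n, Ω_{2k}(n) = Σ_{r=1}^{k} d_{k,r} · (S_1(n))^r, as an identity of rational numbers, where d_{k,r} = Σ_{m=r}^{k} (2^r / (2m)!) · R(k,m) · Ps_m^(r). -/
/-- `S k n = 1^k + 2^k + ⋯ + n^k`, the sum of the `k`-th powers of the first `n`
positive integers; in particular `S 1 n = n(n+1)/2`. -/
def S (k n : ℕ) : ℕ := ∑ i ∈ Finset.Icc 1 n, i ^ k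

/-- `Ω k n = n^k − (n-1)^k + ⋯ + (-1)^{n-1} 1^k`, the alternating sum of the `k`-th
powers of the first `n` positive integers. -/
def Om (k n : ℕ) : ℤ := ∑ i ∈ Finset.Icc 1 n, (-1 : ℤ) ^ (n - i) * ((i ^ k : ℕ) : ℤ)

/-- `R k m = ∑_{j=0}^m (-1)^j C(2m, j) (m-j)^{2k}`, the sequence A304330. -/
def R (k m : ℕ) : ℤ :=
  ∑ j ∈ Finset.range (m + 1),
    (-1 : ℤ) ^ j * ((2 * m).choose j : ℤ) * (((m - j) ^ (2 * k) : ℕ) : ℤ)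

/-- The (signed) Legendre-Stirling number of the first kind `Ps_m^{(r)}`: the
coefficient of `x^r` in `∏_{j=0}^{m-1} (x − j(j+1))`. -/
noncomputable def Ps (m r : ℕ) : ℤ :=
  (∏ j ∈ Finset.range m, (Polynomial.X - Polynomial.C ((j * (j + 1) : ℕ) : ℤ))).coeff r

/-- The coefficients `d_{k,r}`. -/
noncomputable def d (k r : ℕ) : ℚ :=
  ∑ m ∈ Finset.Icc r k,
    (2 ^ r / (Nat.factorial (2 * m) : ℚ)) * (R k m : ℚ) * (Ps m r : ℚ)

/-!
Put `f(t) = ∑_{r=1}^k d_{k,r} t^r`. Exchanging the two sums in `d` and recognising the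
Legendre–Stirling numbers as coefficients gives
`f(u/2) = ∑_{m=1}^k R(k,m)/(2m)! ∏_{j<m} (u - j(j+1))`.
At `u = x(x+1)` and `u = (x-1)x` the products factor as `∏ (x-j)(x+j+1)` and `∏ (x+j)(x-j-1)`,
and shifting the index in `x ∏ (x+j+1)` and `x ∏ (x-j-1)` shows that their sum is
`2 ∏_{j<m} (x² - j²)` when `x ≠ 0`. Hence
`f(x(x+1)/2) + f((x-1)x/2) = ∑_m T(2k,2m) ∏_{j<m} (x² - j²) = x^{2k}`, the expansion of `x^{2k}`
in central factorial numbers `T(2k,2m) = 2R(k,m)/(2m)!`; it follows from the recurrence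
`T(2k+2,2m+2) = T(2k,2m) + (m+1)² T(2k,2m+2)` together with `T(2k,2m) = 0` for `m > k`
(a `2m`-th finite difference of a polynomial of degree `2k`).
Since `Ω_{2k}(n) + Ω_{2k}(n-1) = n^{2k}` and `S_1(n-1) = (n-1)n/2`, both sides of the theorem
satisfy the same recursion in `n` and vanish at `n = 0`.
-/

open Polynomial Finset

lemma R_eq_sum_intCast (k m : ℕ) :
    R k m = ∑ j ∈ range (m + 1),
      (-1 : ℤ) ^ j * ((2 * m).choose j : ℤ) * ((m : ℤ) - j) ^ (2 * k) := by
  refine sum_congr rfl fun j hj => ?_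
  rw [Nat.cast_pow, Nat.cast_sub (Nat.lt_succ_iff.mp (mem_range.mp hj))]

lemma R_zero_right {k : ℕ} (hk : 1 ≤ k) : R k 0 = 0 := by
  simp [R, show k ≠ 0 by omega]

lemma R_one_one : R 1 1 = 1 := by
  simp [R, sum_range_succ]

lemma two_mul_R {k : ℕ} (hk : 1 ≤ k) (m : ℕ) :
    2 * R k m = ∑ j ∈ range (2 * m + 1),
      (-1 : ℤ) ^ j * ((2 * m).choose j : ℤ) * ((m : ℤ) - j) ^ (2 * k) := by
  set f : ℕ → ℤ := fun j => (-1 : ℤ) ^ j * ((2 * m).choose j : ℤ) * ((m : ℤ) - j) ^ (2 * k)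
  have hR : R k m = ∑ j ∈ range (m + 1), f j := R_eq_sum_intCast k m
  have hmid : f m = 0 := by simp [f, show k ≠ 0 by omega]
  rw [sum_range_succ, hmid, add_zero] at hR
  have hrefl : ∀ i ∈ range m, f (m + (i + 1)) = f (m - 1 - i) := by
    intro i hi
    have hi := mem_range.mp hi
    simp only [f]
    rw [neg_one_pow_congr (m := m + (i + 1)) (n := m - 1 - i) (by simp only [Nat.even_iff]; omega),
      Nat.choose_symm_of_eq_add (by omega : 2 * m = m + (i + 1) + (m - 1 - i)), Nat.sub_sub,
      Nat.cast_sub (by omega : 1 + i ≤ m)]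
    push_cast
    rw [pow_mul, pow_mul]
    ring
  show _ = ∑ j ∈ range (2 * m + 1), f j
  rw [show 2 * m + 1 = m + (m + 1) by ring, sum_range_add, sum_range_succ', sum_congr rfl hrefl,
    sum_range_reflect f m, add_zero, hmid, add_zero, hR, two_mul]

/-- `2 R(k, m)` is the `2m`-th forward difference of `x ↦ x ^ (2k)` at `-m`. -/
lemma R_eq_zero_of_lt {k m : ℕ} (hk : 1 ≤ k) (h : k < m) : R k m = 0 := by
  have hΔ := congr_fun (fwdDiff_iter_pow_eq_zero_of_lt (R := ℤ) (show 2 * k < 2 * m by omega))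
    (-(m : ℤ))
  rw [fwdDiff_iter_eq_sum_shift, Pi.zero_apply] at hΔ
  suffices 2 * R k m = 0 by omega
  rw [two_mul_R hk, ← hΔ]
  refine sum_congr rfl fun j hj => ?_
  rw [neg_one_pow_congr (m := 2 * m - j) (n := j)
    (by simp only [Nat.even_iff]; have := mem_range.mp hj; omega)]
  simp only [smul_eq_mul, nsmul_eq_mul, mul_one, pow_mul]
  ring

lemma choose_succ_succ_mul (n i : ℕ) :
    (n + 2).choose (i + 1) * (i + 1) * (n + 1 - i) = (n + 2) * (n + 1) * n.choose i := by
  have h1 := Nat.choose_mul_succ_eq (n + 1) (i + 1)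
  rw [show n + 1 + 1 - (i + 1) = n + 1 - i by omega] at h1
  calc _ = (n + 2).choose (i + 1) * (n + 1 - i) * (i + 1) := by ring
    _ = (n + 2) * ((n + 1).choose (i + 1) * (i + 1)) := by rw [← h1]; ring
    _ = _ := by rw [← Nat.add_one_mul_choose_eq]; ring

lemma R_succ_succ (k m : ℕ) :
    R (k + 1) (m + 1) = (2 * m + 2) * (2 * m + 1) * R k m + ((m : ℤ) + 1) ^ 2 * R k (m + 1) := by
  rw [← sub_eq_iff_eq_add, R_eq_sum_intCast, R_eq_sum_intCast, R_eq_sum_intCast, mul_sum, mul_sum,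
    ← sum_sub_distrib, sum_range_succ', show 2 * (m + 1) = 2 * m + 2 by ring]
  push_cast
  refine (add_eq_left.mpr (by ring)).trans (sum_congr rfl fun i hi => ?_)
  have hc := congrArg (Nat.cast : ℕ → ℤ) (choose_succ_succ_mul (2 * m) i)
  push_cast [Nat.cast_sub (by have := mem_range.mp hi; omega : i ≤ 2 * m + 1)] at hc
  linear_combination (-1) ^ i * ((m : ℤ) - i) ^ (2 * k) * hc

/-- For `k ≥ 1` this is the central factorial number `T(2k, 2m)`, by `two_mul_R`. -/
noncomputable def centralFactorial (k m : ℕ) : ℚ := 2 * R k m / (2 * m).factorial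

lemma centralFactorial_zero_right {k : ℕ} (hk : 1 ≤ k) : centralFactorial k 0 = 0 := by
  simp [centralFactorial, R_zero_right hk]

lemma centralFactorial_eq_zero_of_lt {k m : ℕ} (hk : 1 ≤ k) (h : k < m) :
    centralFactorial k m = 0 := by
  simp [centralFactorial, R_eq_zero_of_lt hk h]

lemma centralFactorial_one_one : centralFactorial 1 1 = 1 := by
  simp [centralFactorial, R_one_one, Nat.factorial]

lemma centralFactorial_succ_succ (k m : ℕ) :
    centralFactorial (k + 1) (m + 1)
      = centralFactorial k m + (m + 1) ^ 2 * centralFactorial k (m + 1) := by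
  have hfact : ((2 * (m + 1)).factorial : ℚ) = (2 * m + 2) * (2 * m + 1) * (2 * m).factorial := by
    rw [show 2 * (m + 1) = 2 * m + 1 + 1 by ring, Nat.factorial_succ, Nat.factorial_succ]
    push_cast
    ring
  simp only [centralFactorial, R_succ_succ, hfact]
  push_cast
  field_simp

lemma pow_eq_sum_centralFactorial_mul_prod {k : ℕ} (hk : 1 ≤ k) (y : ℚ) :
    y ^ k = ∑ m ∈ range (k + 1), centralFactorial k m * ∏ j ∈ range m, (y - j ^ 2) := by
  induction k, hk using Nat.le_induction with
  | base => simp [sum_range_succ, centralFactorial_zero_right, centralFactorial_one_one]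
  | succ k hk ih =>
    set P : ℕ → ℚ := fun m => ∏ j ∈ range m, (y - j ^ 2)
    have hP : ∀ m : ℕ, P (m + 1) + m ^ 2 * P m = y * P m := fun m => by
      simp only [P, prod_range_succ]; ring
    have hshift : ∑ m ∈ range (k + 1), ((m : ℚ) + 1) ^ 2 * centralFactorial k (m + 1) * P (m + 1)
        = ∑ m ∈ range (k + 1), (m : ℚ) ^ 2 * centralFactorial k m * P m := by
      have h := (sum_range_succ' (fun m => (m : ℚ) ^ 2 * centralFactorial k m * P m) (k + 1)).symm
        |>.trans (sum_range_succ _ (k + 1))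
      simpa [centralFactorial_eq_zero_of_lt hk (Nat.lt_succ_self k)] using h
    calc y ^ (k + 1) = ∑ m ∈ range (k + 1), centralFactorial k m * (y * P m) := by
          rw [pow_succ, ih, sum_mul]; exact sum_congr rfl fun m _ => by ring
      _ = ∑ m ∈ range (k + 1), centralFactorial k m * P (m + 1)
          + ∑ m ∈ range (k + 1), ((m : ℚ) + 1) ^ 2 * centralFactorial k (m + 1) * P (m + 1) := by
          rw [hshift, ← sum_add_distrib]
          exact sum_congr rfl fun m _ => by rw [← hP]; ring
      _ = _ := by
          rw [sum_range_succ' _ (k + 1), centralFactorial_zero_right (by omega), zero_mul, add_zero,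
            ← sum_add_distrib]
          exact sum_congr rfl fun m _ => by rw [centralFactorial_succ_succ]; ring

lemma sum_range_succ_eq_add_sum_Icc_one {M : Type*} [AddCommMonoid M] (f : ℕ → M) (n : ℕ) :
    ∑ i ∈ range (n + 1), f i = f 0 + ∑ i ∈ Icc 1 n, f i := by
  rw [range_eq_Ico, sum_eq_sum_Ico_succ_bot n.succ_pos, Nat.succ_eq_add_one, zero_add,
    Ico_add_one_right_eq_Icc]

lemma Ps_zero_right {m : ℕ} (hm : 1 ≤ m) : Ps m 0 = 0 := by
  obtain ⟨m, rfl⟩ := Nat.exists_eq_add_of_le' hm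
  simp [Ps, coeff_zero_eq_eval_zero, eval_prod, prod_range_succ']

lemma sum_Ps_mul_pow {A : Type*} [CommRing A] {m : ℕ} (hm : 1 ≤ m) (u : A) :
    ∑ r ∈ Icc 1 m, (Ps m r : A) * u ^ r = ∏ j ∈ range m, (u - j * (j + 1)) := by
  have hdeg : (∏ j ∈ range m, (X - C ((j * (j + 1) : ℕ) : ℤ))).natDegree < m + 1 := by
    rw [natDegree_finsetProd_X_sub_C_eq_card, card_range]; omega
  have h := aeval_eq_sum_range' hdeg u
  rw [sum_range_succ_eq_add_sum_Icc_one] at h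
  change _ = Ps m 0 • u ^ 0 + ∑ r ∈ Icc 1 m, Ps m r • u ^ r at h
  simpa [Ps_zero_right hm, zsmul_eq_mul] using h.symm

lemma sum_d_mul_pow (k : ℕ) (u : ℚ) :
    ∑ r ∈ Icc 1 k, d k r * (u / 2) ^ r
      = ∑ m ∈ Icc 1 k, R k m / (2 * m).factorial * ∏ j ∈ range m, (u - j * (j + 1)) := by
  simp only [d, sum_mul]
  rw [sum_comm' (t' := Icc 1 k) (s' := fun m => Icc 1 m) (by intro r m; simp only [mem_Icc]; omega)]
  refine sum_congr rfl fun m hm => ?_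
  rw [← sum_Ps_mul_pow (mem_Icc.mp hm).1, mul_sum]
  refine sum_congr rfl fun r _ => ?_
  rw [div_pow]
  field_simp

lemma prod_add_prod_eq_two_mul_prod {K : Type*} [Field K] {x : K} (hx : x ≠ 0) (m : ℕ) :
    ∏ j ∈ range m, (x * (x + 1) - j * (j + 1)) + ∏ j ∈ range m, ((x - 1) * x - j * (j + 1))
      = 2 * ∏ j ∈ range m, (x ^ 2 - j ^ 2) := by
  have hup := (prod_range_succ' (fun j : ℕ => x + j) m).symm.trans (prod_range_succ _ m)
  have hdown := (prod_range_succ' (fun j : ℕ => x - j) m).symm.trans (prod_range_succ _ m)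
  push_cast at hup hdown
  have hplus : ∏ j ∈ range m, (x * (x + 1) - j * (j + 1))
      = (∏ j ∈ range m, (x - j)) * ∏ j ∈ range m, (x + (j + 1)) := by
    rw [← prod_mul_distrib]; exact prod_congr rfl fun j _ => by ring
  have hminus : ∏ j ∈ range m, ((x - 1) * x - j * (j + 1))
      = (∏ j ∈ range m, (x + j)) * ∏ j ∈ range m, (x - (j + 1)) := by
    rw [← prod_mul_distrib]; exact prod_congr rfl fun j _ => by ring
  have hsq : ∏ j ∈ range m, (x ^ 2 - j ^ 2)
      = (∏ j ∈ range m, (x - j)) * ∏ j ∈ range m, (x + j) := by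
    rw [← prod_mul_distrib]; exact prod_congr rfl fun j _ => by ring
  rw [hplus, hminus, hsq]
  apply mul_left_cancel₀ hx
  linear_combination (∏ j ∈ range m, (x - j)) * hup + (∏ j ∈ range m, (x + j)) * hdown

lemma sum_d_mul_pow_add_sum_d_mul_pow {k : ℕ} (hk : 1 ≤ k) {x : ℚ} (hx : x ≠ 0) :
    ∑ r ∈ Icc 1 k, d k r * (x * (x + 1) / 2) ^ r + ∑ r ∈ Icc 1 k, d k r * ((x - 1) * x / 2) ^ r
      = x ^ (2 * k) := by
  rw [sum_d_mul_pow, sum_d_mul_pow, ← sum_add_distrib, pow_mul,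
    pow_eq_sum_centralFactorial_mul_prod hk, sum_range_succ_eq_add_sum_Icc_one,
    centralFactorial_zero_right hk, zero_mul, zero_add]
  refine sum_congr rfl fun m _ => ?_
  rw [← mul_add, prod_add_prod_eq_two_mul_prod hx, centralFactorial]
  ring

lemma Om_succ (K n : ℕ) : Om K (n + 1) = ((n + 1) ^ K : ℕ) - Om K n := by
  simp only [Om]
  rw [sum_Icc_succ_top (by omega), Nat.sub_self, pow_zero, one_mul, add_comm, sub_eq_add_neg,
    ← sum_neg_distrib]
  refine congrArg _ (sum_congr rfl fun i hi => ?_)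
  rw [Nat.sub_add_comm (mem_Icc.mp hi).2, pow_succ]
  ring

lemma S_one_eq (n : ℕ) : (S 1 n : ℚ) = n * (n + 1) / 2 := by
  induction n with
  | zero => simp [S]
  | succ n ih =>
    simp only [S] at *
    rw [sum_Icc_succ_top (by omega), Nat.cast_add, ih]
    push_cast
    ring

theorem stmt_14_general (k n : ℕ) (hk : 1 ≤ k) :
    (Om (2 * k) n : ℚ) = ∑ r ∈ Finset.Icc 1 k, d k r * (S 1 n : ℚ) ^ r := by
  induction n with
  | zero =>
    rw [show Om (2 * k) 0 = 0 from rfl, show S 1 0 = 0 from rfl, Int.cast_zero, Nat.cast_zero]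
    refine (sum_eq_zero fun r hr => ?_).symm
    rw [zero_pow (Nat.one_le_iff_ne_zero.mp (mem_Icc.mp hr).1), mul_zero]
  | succ n ih =>
    have h := sum_d_mul_pow_add_sum_d_mul_pow hk (x := (n : ℚ) + 1) (by positivity)
    rw [add_sub_cancel_right] at h
    rw [Om_succ, Int.cast_sub, ih, S_one_eq, S_one_eq]
    push_cast
    linear_combination -h

theorem stmt_14 (k n : ℕ) (hk : 1 ≤ k) (hn : 1 ≤ n) :
    (Om (2 * k) n : ℚ) = ∑ r ∈ Finset.Icc 1 k, d k r * (S 1 n : ℚ) ^ r :=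
  stmt_14_general k n hk
end

section
/- For every integer k ≥ 2, Σ_{m=1}^{k} (-1)^m · ((m-1)!)^2 / (2m)! · R(k,m) = 0, as an identity of rational numbers. -/
open Finset Nat

theorem sum_range_neg_one_pow_mul_choose_mul_add_pow {A : Type*} [CommRing A] {N d : ℕ}
    (h : d < N) (y : A) :
    ∑ j ∈ range (N + 1), (-1 : A) ^ j * N.choose j * (y + j) ^ d = 0 := by
  have hΔ := congr_fun (fwdDiff_iter_pow_eq_zero_of_lt (R := A) h) y
  rw [fwdDiff_iter_eq_sum_shift, Pi.zero_apply] at hΔ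
  rw [← neg_one_pow_mul_eq_zero_iff (n := N), mul_sum, ← hΔ]
  refine sum_congr rfl fun j hj => ?_
  have hjN : j ≤ N := mem_range_succ_iff.1 hj
  rw [zsmul_eq_mul, nsmul_one, ← mul_assoc, ← mul_assoc, ← pow_add]
  push_cast
  rw [neg_one_pow_congr (m := N + j) (n := N - j) (by rw [Nat.even_add, Nat.even_sub hjN])]

theorem sum_range_two_mul_add_one_of_symm {M : Type*} [AddCommMonoid M] (g : ℕ → M) (n : ℕ)
    (hg : ∀ i ≤ n, g (n + i) = g (n - i)) :
    ∑ j ∈ range (2 * n + 1), g j + g n = 2 • ∑ j ∈ range (n + 1), g j := by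
  have hupper : ∑ i ∈ range (n + 1), g (n + i) = ∑ j ∈ range (n + 1), g j := by
    rw [← sum_range_reflect g (n + 1)]
    exact sum_congr rfl fun i hi => by rw [hg i (mem_range_succ_iff.1 hi), Nat.add_sub_cancel]
  rw [two_mul, add_assoc, sum_range_add, hupper, add_right_comm, ← sum_range_succ, two_nsmul]

theorem neg_one_pow_mul_R (k n : ℕ) {N : ℕ} (hN : n < N) :
    (-1 : ℤ) ^ n * R k n =
      ∑ i ∈ range N, (-1) ^ i * ((2 * n).choose (n + i) : ℤ) * (i : ℤ) ^ (2 * k) := by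
  have hvanish : ∀ i ∈ range N, i ∉ range (n + 1) →
      (-1 : ℤ) ^ i * ((2 * n).choose (n + i) : ℤ) * (i : ℤ) ^ (2 * k) = 0 := fun i _ hi => by
    rw [choose_eq_zero_of_lt (by rw [mem_range] at hi; omega)]
    simp
  rw [← sum_subset (range_subset_range.2 hN) hvanish, R, mul_sum, ← sum_range_reflect]
  refine sum_congr rfl fun i hi => ?_
  have hin : i ≤ n := mem_range_succ_iff.1 hi
  rw [Nat.add_sub_cancel, Nat.sub_sub_self hin,
    ← choose_symm_of_eq_add (by omega : 2 * n = (n - i) + (n + i)), ← mul_assoc, ← mul_assoc,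
    ← pow_add, neg_one_pow_congr (m := n + (n - i)) (n := i)
      (by rw [Nat.even_add, Nat.even_sub hin]; tauto)]
  push_cast
  rfl

theorem R_zero_right_s15 {e : ℕ} (he : e ≠ 0) : R e 0 = 0 := by
  simp [R, he]

theorem R_eq_zero_of_lt_s15 {e n : ℕ} (he : 0 < e) (hen : e < n) : R e n = 0 := by
  set g : ℕ → ℤ := fun j => (-1) ^ j * (2 * n).choose j * ((n : ℤ) - j) ^ (2 * e)
  have hR : R e n = ∑ j ∈ range (n + 1), g j :=
    sum_congr rfl fun j hj => by simp [g, Nat.cast_sub (mem_range_succ_iff.1 hj)]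
  have hsymm : ∀ i ≤ n, g (n + i) = g (n - i) := fun i hi => by
    simp only [g]
    rw [choose_symm_of_eq_add (by omega : 2 * n = (n - i) + (n + i)),
      neg_one_pow_congr (m := n + i) (n := n - i) (by rw [Nat.even_add, Nat.even_sub hi]),
      Nat.cast_sub hi]
    push_cast
    rw [show (n : ℤ) - (n + i) = -(n - (n - i)) by ring, Even.neg_pow ⟨e, two_mul e⟩]
  have hfull : ∑ j ∈ range (2 * n + 1), g j = 0 := by
    rw [← sum_range_neg_one_pow_mul_choose_mul_add_pow (N := 2 * n) (d := 2 * e) (by omega)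
      (-n : ℤ)]
    refine sum_congr rfl fun j _ => ?_
    rw [show (-n : ℤ) + j = -(n - j) by ring, Even.neg_pow ⟨e, two_mul e⟩]
  have hmid : g n = 0 := by simp only [g, sub_self, zero_pow (by omega : 2 * e ≠ 0), mul_zero]
  have hfold := sum_range_two_mul_add_one_of_symm g n hsymm
  rw [hfull, hmid, ← hR] at hfold
  simpa using hfold

section Field

variable {K : Type*} [Field K] [CharZero K]

theorem add_mul_sub_mul_choose_two_mul_succ (m i : ℕ) :
    ((m + 1 + i : K) * (m + 1 - i)) * (2 * (m + 1)).choose (m + 1 + i) =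
      (2 * m + 2) * (2 * m + 1) * (2 * m).choose (m + i) := by
  rcases le_or_gt i (m + 1) with hi | hi
  · have h₁ : ((2 * m + 1 + 1 : ℕ) : K) * (2 * m + 1).choose (m + i) =
        (2 * m + 1 + 1).choose (m + i + 1) * (m + i + 1 : ℕ) := by
      exact_mod_cast add_one_mul_choose_eq (2 * m + 1) (m + i)
    have h₂ : ((2 * m).choose (m + i) : K) * (2 * m + 1 : ℕ) =
        (2 * m + 1).choose (m + i) * (m + 1 - i : ℕ) := by
      have h := choose_mul_succ_eq (2 * m) (m + i)
      rw [show 2 * m + 1 - (m + i) = m + 1 - i by omega] at h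
      exact_mod_cast h
    rw [show 2 * (m + 1) = 2 * m + 1 + 1 by ring, show m + 1 + i = m + i + 1 by ring]
    push_cast [Nat.cast_sub hi] at h₁ h₂ ⊢
    linear_combination (m + 1 - (i : K)) * h₁.symm + (2 * m + 2) * h₂.symm
  · rw [choose_eq_zero_of_lt (by omega), choose_eq_zero_of_lt (by omega)]
    simp

theorem choose_div_centralBinom_sub (m i : ℕ) :
    ((2 * (m + 1)).choose (m + 1 + i) : K) / centralBinom (m + 1) -
        ((2 * m).choose (m + i) : K) / centralBinom m =
      i ^ 2 * ((m ! : K) ^ 2 / (2 * (m + 1))!) * (2 * (m + 1)).choose (m + 1 + i) := by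
  have hi := add_mul_sub_mul_choose_two_mul_succ (K := K) m i
  have h0 := add_mul_sub_mul_choose_two_mul_succ (K := K) m 0
  simp only [add_zero, CharP.cast_eq_zero, sub_zero] at h0
  have hc : ((2 * m)! : K) = (2 * m).choose m * m ! * m ! := by
    exact_mod_cast (by simpa [two_mul] using (add_choose_mul_factorial_mul_factorial m m).symm)
  have hf : ((2 * (m + 1))! : K) = (2 * m + 2) * (2 * m + 1) * (2 * m)! := by
    rw [show 2 * (m + 1) = 2 * m + 1 + 1 by ring, factorial_succ, factorial_succ]
    push_cast
    ring
  have hC : ((2 * m).choose m : K) ≠ 0 := by exact_mod_cast (choose_pos (by omega)).ne'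
  have hC' : ((2 * (m + 1)).choose (m + 1) : K) ≠ 0 := by
    exact_mod_cast (choose_pos (by omega)).ne'
  have hm : (m ! : K) ≠ 0 := by exact_mod_cast (factorial_pos _).ne'
  have h₁ : (2 * m + 1 : K) ≠ 0 := by exact_mod_cast (by omega : 2 * m + 1 ≠ 0)
  have h₂ : (2 * m + 2 : K) ≠ 0 := by exact_mod_cast (by omega : 2 * m + 2 ≠ 0)
  rw [centralBinom_eq_two_mul_choose, centralBinom_eq_two_mul_choose, hf, hc]
  field_simp
  linear_combination (((2 * (m + 1)).choose (m + 1) : ℕ) : K) * hi -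
    (((2 * (m + 1)).choose (m + 1 + i) : ℕ) : K) * h0

theorem neg_one_pow_mul_R_div_centralBinom (e n : ℕ) {N : ℕ} (hN : n < N) :
    (-1 : K) ^ n * R e n / centralBinom n =
      ∑ i ∈ range N,
        (-1) ^ i * i ^ (2 * e) * ((2 * n).choose (n + i) / centralBinom n : K) := by
  have h := congrArg (Int.cast : ℤ → K) (neg_one_pow_mul_R e n hN)
  push_cast at h
  rw [h, sum_div]
  exact sum_congr rfl fun i _ => by ring

theorem sum_Icc_R_succ (e n : ℕ) :
    ∑ m ∈ Icc 1 n, (-1 : K) ^ m * (((m - 1)! : K) ^ 2 / (2 * m)!) * R (e + 1) m =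
      (-1) ^ n * R e n / centralBinom n - R e 0 := by
  set A : ℕ → K := fun n => (-1) ^ n * R e n / centralBinom n
  have hstep : ∀ m, (-1 : K) ^ (m + 1) * ((m ! : K) ^ 2 / (2 * (m + 1))!) * R (e + 1) (m + 1) =
      A (m + 1) - A m := fun m => by
    have h := congrArg (Int.cast : ℤ → K) (neg_one_pow_mul_R (e + 1) (m + 1) (lt_add_one _))
    push_cast at h
    simp only [A]
    rw [mul_comm _ ((m ! : K) ^ 2 / _), mul_assoc, h, mul_sum,
      neg_one_pow_mul_R_div_centralBinom e (m + 1) (lt_add_one _),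
      neg_one_pow_mul_R_div_centralBinom e m (by omega : m < m + 1 + 1), ← sum_sub_distrib]
    refine sum_congr rfl fun i _ => ?_
    rw [← mul_sub, choose_div_centralBinom_sub]
    ring
  rw [← Ico_add_one_right_eq_Icc, sum_Ico_eq_sum_range, Nat.add_sub_cancel]
  simp_rw [add_comm 1, Nat.add_sub_cancel, hstep, sum_range_sub]
  simp [A]

end Field

theorem stmt_15 (k : ℕ) (hk : 2 ≤ k) :
    ∑ m ∈ Finset.Icc 1 k,
        (-1 : ℚ) ^ m * ((Nat.factorial (m - 1) : ℚ) ^ 2 / (Nat.factorial (2 * m) : ℚ)) *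
          (R k m : ℚ) = 0 := by
  obtain ⟨e, rfl⟩ : ∃ e, k = e + 1 := ⟨k - 1, by omega⟩
  rw [sum_Icc_R_succ, R_eq_zero_of_lt_s15 (by omega) (lt_add_one e), R_zero_right_s15 (by omega)]
  simp
end

section
/- For every integer k ≥ 2, Σ_{m=1}^{k} (-1)^m · ((m-1)!)^2 · U(k,m) = 0, where U(k,m) = (2/(2m)!) · Σ_{j=0}^{m} (-1)^j · C(2m, j) · (m-j)^(2k) are the central factorial numbers with even indices of the second kind. -/
/-!
Substituting `n = m - j` turns `(-1)^m ((m-1)!)^2 U(k,m)` into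
`∑_{n=1}^m 2 (-1)^n n^{2k} ((m-1)!)^2 / ((m-n)! (m+n)!)`. After exchanging the two sums, the
inner sum over `m` telescopes to `(k!)^2 / (n^2 (k-n)! (k+n)!)`, so the whole sum is a multiple of
`∑_{n=1}^k (-1)^n C(2k, k+n) n^{2k-2}`. Since `x ↦ x^{2k-2}` is even, this is, up to the factor
`2 (-1)^k`, the `2k`-th forward difference of `x ↦ x^{2k-2}` at `-k`, which vanishes because
`2k - 2 < 2k`.
-/

/-- The central factorial numbers with even indices of the second kind,
`U k m = T(2k, 2m) = (2/(2m)!) ∑_{j=0}^m (-1)^j C(2m, j) (m-j)^{2k}`. -/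
def U (k m : ℕ) : ℚ :=
  (2 / (Nat.factorial (2 * m) : ℚ)) *
    ∑ j ∈ Finset.range (m + 1),
      (-1 : ℚ) ^ j * ((2 * m).choose j : ℚ) * (((m - j) ^ (2 * k) : ℕ) : ℚ)

open Finset Nat

theorem neg_one_pow_sub_eq_neg_one_pow_add {R : Type*} [Monoid R] [HasDistribNeg R] {m n : ℕ}
    (h : n ≤ m) : (-1 : R) ^ (m - n) = (-1) ^ (m + n) := by
  rw [show m + n = m - n + 2 * n by omega, pow_add, pow_mul, neg_one_sq, one_pow, mul_one]

theorem sum_range_two_mul_add_one_eq {M : Type*} [AddCommMonoid M] (f : ℕ → M) (k : ℕ) :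
    ∑ j ∈ range (2 * k + 1), f j = f k + ∑ n ∈ Icc 1 k, (f (k - n) + f (k + n)) := by
  rw [two_mul, add_assoc, sum_range_add, sum_range_succ', ← sum_range_reflect, add_zero,
    ← Ico_add_one_right_eq_Icc, sum_Ico_eq_sum_range, add_tsub_cancel_right, sum_add_distrib]
  simp only [Nat.sub_sub, add_comm 1]
  abel

theorem sum_range_neg_one_pow_mul_choose_mul_add_pow_eq_zero {R : Type*} [CommRing R]
    {n r : ℕ} (h : r < n) (x : R) :
    ∑ j ∈ range (n + 1), (-1 : R) ^ (n - j) * n.choose j * (x + j) ^ r = 0 := by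
  have hdiff := fwdDiff_iter_eq_sum_shift 1 (fun y : R ↦ y ^ r) n x
  rw [fwdDiff_iter_pow_eq_zero_of_lt h] at hdiff
  simpa [zsmul_eq_mul] using hdiff.symm

theorem sum_Icc_neg_one_pow_mul_choose_add_mul_pow_eq_zero {R : Type*} [CommRing R]
    [NoZeroDivisors R] [CharZero R] {k r : ℕ} (hr : Even r) (hr₀ : r ≠ 0) (hrk : r < 2 * k) :
    ∑ n ∈ Icc 1 k, (-1 : R) ^ n * (2 * k).choose (k + n) * (n : R) ^ r = 0 := by
  have h := sum_range_neg_one_pow_mul_choose_mul_add_pow_eq_zero hrk (-k : R)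
  rw [sum_range_two_mul_add_one_eq] at h
  have hsymm : ∀ n ∈ Icc 1 k,
      (-1 : R) ^ (2 * k - (k - n)) * (2 * k).choose (k - n) * (-k + (k - n : ℕ) : R) ^ r
        + (-1 : R) ^ (2 * k - (k + n)) * (2 * k).choose (k + n) * (-k + (k + n : ℕ) : R) ^ r
        = 2 * (-1) ^ k * ((-1 : R) ^ n * (2 * k).choose (k + n) * (n : R) ^ r) := by
    intro n hn
    have hnk : n ≤ k := (mem_Icc.mp hn).2
    rw [show 2 * k - (k - n) = k + n by omega, show 2 * k - (k + n) = k - n by omega,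
      neg_one_pow_sub_eq_neg_one_pow_add hnk, ← choose_symm (by omega : k + n ≤ 2 * k),
      show 2 * k - (k + n) = k - n by omega, Nat.cast_sub hnk]
    push_cast
    rw [show (-k + (k - n) : R) = -n by ring, show (-k + (k + n) : R) = n by ring, hr.neg_pow,
      pow_add]
    ring
  rw [sum_congr rfl hsymm, ← mul_sum, neg_add_cancel] at h
  simpa [zero_pow hr₀] using h

-- The induction step is `(k + 1 - n) (k + 1 + n) + n ^ 2 = (k + 1) ^ 2`.
theorem sum_Icc_factorial_sq_div {K : Type*} [Field K] [CharZero K] {n k : ℕ} (hn : 1 ≤ n)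
    (hnk : n ≤ k) :
    ∑ m ∈ Icc n k, ((m - 1)! : K) ^ 2 / ((m - n)! * (m + n)!)
      = (k ! : K) ^ 2 / (n ^ 2 * (k - n)! * (k + n)!) := by
  have hn₀ : (n : K) ≠ 0 := Nat.cast_ne_zero.mpr (by omega)
  induction k, hnk using Nat.le_induction with
  | base =>
    rw [Icc_self, sum_singleton, Nat.sub_self, ← Nat.mul_factorial_pred (by omega : n ≠ 0)]
    push_cast
    field_simp
  | succ k hnk ih =>
    obtain ⟨d, rfl⟩ := Nat.exists_eq_add_of_le hnk
    rw [sum_Icc_succ_top (by omega), ih, add_tsub_cancel_right, add_tsub_cancel_left,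
      show n + d + 1 - n = d + 1 by omega, show n + d + 1 + n = n + d + n + 1 by omega,
      factorial_succ d, factorial_succ (n + d + n), factorial_succ (n + d)]
    have : (n + d + n + 1 : K) ≠ 0 := by exact_mod_cast succ_ne_zero (n + d + n)
    push_cast
    field_simp
    ring

theorem U_eq_sum_Icc {k : ℕ} (hk : k ≠ 0) (m : ℕ) :
    U k m =
      ∑ n ∈ Icc 1 m, 2 * (-1 : ℚ) ^ (m + n) * (n : ℚ) ^ (2 * k) / ((m - n)! * (m + n)!) := by
  rw [U, mul_sum, ← sum_range_reflect, range_eq_Ico, sum_eq_sum_Ico_succ_bot m.succ_pos,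
    zero_add, succ_eq_add_one, add_tsub_cancel_right, Nat.sub_zero, Nat.sub_self,
    zero_pow (by omega), Nat.cast_zero, mul_zero, mul_zero, zero_add, Ico_add_one_right_eq_Icc]
  refine sum_congr rfl fun n hn ↦ ?_
  have hnm : n ≤ m := (mem_Icc.mp hn).2
  rw [neg_one_pow_sub_eq_neg_one_pow_add hnm, Nat.cast_choose ℚ (by omega : m - n ≤ 2 * m),
    show 2 * m - (m - n) = m + n by omega, show m - (m - n) = n by omega]
  push_cast
  field_simp

theorem stmt_16 (k : ℕ) (hk : 2 ≤ k) :
    ∑ m ∈ Finset.Icc 1 k, (-1 : ℚ) ^ m * (Nat.factorial (m - 1) : ℚ) ^ 2 * U k m = 0 := by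
  calc ∑ m ∈ Icc 1 k, (-1 : ℚ) ^ m * ((m - 1)! : ℚ) ^ 2 * U k m
      = ∑ m ∈ Icc 1 k, ∑ n ∈ Icc 1 m,
          2 * (-1 : ℚ) ^ n * (n : ℚ) ^ (2 * k) *
            (((m - 1)! : ℚ) ^ 2 / ((m - n)! * (m + n)!)) := by
        refine sum_congr rfl fun m _ ↦ ?_
        rw [U_eq_sum_Icc (by omega), mul_sum]
        refine sum_congr rfl fun n _ ↦ ?_
        have hsign : (-1 : ℚ) ^ m * (-1) ^ (m + n) = (-1) ^ n := by
          rw [← pow_add, ← add_assoc, pow_add, Even.neg_one_pow ⟨m, rfl⟩, one_mul]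
        rw [← hsign]
        ring
    _ = ∑ n ∈ Icc 1 k, ∑ m ∈ Icc n k,
          2 * (-1 : ℚ) ^ n * (n : ℚ) ^ (2 * k) *
            (((m - 1)! : ℚ) ^ 2 / ((m - n)! * (m + n)!)) :=
        sum_comm' fun m n ↦ by simp only [mem_Icc]; omega
    _ = ∑ n ∈ Icc 1 k, 2 * (k ! : ℚ) ^ 2 / (2 * k)! *
          ((-1 : ℚ) ^ n * (2 * k).choose (k + n) * (n : ℚ) ^ (2 * k - 2)) := by
        refine sum_congr rfl fun n hn ↦ ?_
        obtain ⟨hn₁, hnk⟩ := mem_Icc.mp hn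
        have hpow : (n : ℚ) ^ (2 * k) = n ^ (2 * k - 2) * n ^ 2 := by
          rw [← pow_add, Nat.sub_add_cancel (by omega)]
        have hn₀ : (n : ℚ) ≠ 0 := Nat.cast_ne_zero.mpr (by omega)
        rw [← mul_sum, sum_Icc_factorial_sq_div hn₁ hnk, hpow,
          Nat.cast_choose ℚ (by omega : k + n ≤ 2 * k), show 2 * k - (k + n) = k - n by omega]
        field_simp
    _ = 0 := by
        rw [← mul_sum, sum_Icc_neg_one_pow_mul_choose_add_mul_pow_eq_zero ⟨k - 1, by omega⟩
          (by omega) (by omega), mul_zero]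
end

section
/- For every integer k ≥ 1, the 2k-th Bernoulli number satisfies B_{2k} = Σ_{m=1}^{k} (-1)^(m-1) · (m! · (m-1)! / (2m+1)!) · R(k,m), as an identity of rational numbers. -/
open Finset
open Polynomial hiding bernoulli bernoulli_one sum_bernoulli

theorem Nat.add_one_mul_sub_mul_choose_add_two (n j : ℕ) :
    (j + 1) * (n + 1 - j) * (n + 2).choose (j + 1) = (n + 2) * (n + 1) * n.choose j := by
  calc (j + 1) * (n + 1 - j) * (n + 2).choose (j + 1)
      = (n + 1 - j) * ((n + 2).choose (j + 1) * (j + 1)) := by ring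
    _ = (n + 2) * ((n + 1).choose j * (n + 1 - j)) := by rw [← Nat.add_one_mul_choose_eq]; ring
    _ = (n + 2) * (n + 1) * n.choose j := by rw [← Nat.choose_mul_succ_eq]; ring

section CentralDifference

variable {A : Type*} [CommRing A]

/-- `δ^{2m} f (0)`, for the central difference `δ f (x) = f (x + 1/2) - f (x - 1/2)`. -/
def centralDiff (m : ℕ) (f : A → A) : A :=
  ∑ j ∈ range (2 * m + 1), (-1) ^ j * ((2 * m).choose j : A) * f (m - j)

theorem centralDiff_sq_mul (m : ℕ) (f : A → A) :
    centralDiff (m + 1) (fun x ↦ x ^ 2 * f x) =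
      (m + 1) ^ 2 * centralDiff (m + 1) f + (2 * m + 2) * (2 * m + 1) * centralDiff m f := by
  have hterm : ∀ j ∈ range (2 * m + 2),
      (-1) ^ (j + 1) * ((2 * m + 2).choose (j + 1) : A)
          * (((m + 1 : ℕ) - (j + 1 : ℕ) : A) ^ 2 * f ((m + 1 : ℕ) - (j + 1 : ℕ)))
        - (m + 1) ^ 2 * ((-1) ^ (j + 1) * ((2 * m + 2).choose (j + 1) : A)
          * f ((m + 1 : ℕ) - (j + 1 : ℕ)))
        = (2 * m + 2) * (2 * m + 1) * ((-1) ^ j * ((2 * m).choose j : A) * f (m - j)) := by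
    intro j hj
    have hj : j ≤ 2 * m + 1 := by simpa [Nat.lt_succ_iff] using hj
    have key := congrArg (Nat.cast : ℕ → A)
      (Nat.add_one_mul_sub_mul_choose_add_two (2 * m) j)
    push_cast [hj] at key
    rw [show ((m + 1 : ℕ) - (j + 1 : ℕ) : A) = m - j by push_cast; ring]
    linear_combination (-1) ^ j * f (m - j) * key
  have hdiff : centralDiff (m + 1) (fun x ↦ x ^ 2 * f x) - (m + 1) ^ 2 * centralDiff (m + 1) f
      = (2 * m + 2) * (2 * m + 1) * centralDiff m f := by
    rw [centralDiff, centralDiff, mul_sum, ← sum_sub_distrib, sum_range_succ',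
      show 2 * (m + 1) = 2 * m + 2 by ring, sum_congr rfl hterm, ← mul_sum, sum_range_succ,
      Nat.choose_eq_zero_of_lt (Nat.lt_succ_self _)]
    simp [centralDiff]
  linear_combination hdiff

theorem centralDiff_pow_eq_zero {k m : ℕ} (h : k < m) :
    centralDiff m (fun x : A ↦ x ^ (2 * k)) = 0 := by
  induction k generalizing m with
  | zero =>
    have := congrArg (Int.cast : ℤ → A) (Int.alternating_sum_range_choose_of_ne (n := 2 * m)
      (by omega))
    push_cast at this
    simpa [centralDiff] using this
  | succ k ih =>
    obtain ⟨n, rfl⟩ : ∃ n, m = n + 1 := ⟨m - 1, by omega⟩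
    have hpow : (fun x : A ↦ x ^ (2 * (k + 1))) = fun x ↦ x ^ 2 * x ^ (2 * k) := by
      funext x; ring
    rw [hpow, centralDiff_sq_mul, ih (by omega), ih (by omega), mul_zero, mul_zero, add_zero]

theorem centralDiff_pow_eq_two_mul_R {k : ℕ} (hk : 1 ≤ k) (m : ℕ) :
    centralDiff m (fun x : A ↦ x ^ (2 * k)) = 2 * R k m := by
  set g : ℕ → A := fun j ↦ (-1) ^ j * ((2 * m).choose j : A) * ((m : A) - j) ^ (2 * k)
  have hR : (R k m : A) = ∑ j ∈ range (m + 1), g j := by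
    rw [R]
    push_cast
    refine sum_congr rfl fun j hj ↦ ?_
    rw [Nat.cast_sub (by simpa [Nat.lt_succ_iff] using hj)]
  have hsymm : ∀ i ∈ range m, g (m + 1 + i) = g (m - 1 - i) := by
    intro i hi
    have hi : i < m := by simpa using hi
    have hchoose : (2 * m).choose (m + 1 + i) = (2 * m).choose (m - 1 - i) := by
      rw [← Nat.choose_symm (by omega)]; congr 1; omega
    have hsign : (-1 : A) ^ (m + 1 + i) = (-1) ^ (m - 1 - i) := by
      rw [show m + 1 + i = (m - 1 - i) + 2 * (i + 1) by omega, pow_add, pow_mul]; simp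
    have hbase : ((m : A) - (m + 1 + i : ℕ)) = -((m : A) - (m - 1 - i : ℕ)) := by
      rw [Nat.sub_sub, Nat.cast_sub (by omega)]; push_cast; ring
    simp only [g, hchoose, hsign, hbase, (even_two_mul k).neg_pow]
  have hupper : ∑ j ∈ Ico (m + 1) (2 * m + 1), g j = ∑ j ∈ range (m + 1), g j := by
    rw [sum_Ico_eq_sum_range, show 2 * m + 1 - (m + 1) = m by omega, sum_congr rfl hsymm,
      sum_range_reflect, sum_range_succ]
    simp [g, zero_pow (by omega : 2 * k ≠ 0)]
  rw [centralDiff, ← sum_range_add_sum_Ico _ (by omega : m + 1 ≤ 2 * m + 1), hupper, hR]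
  ring

end CentralDifference

/-- The central factorial number `T(2k, 2m)`. -/
def centralFactorialNum (k m : ℕ) : ℚ :=
  centralDiff m (fun x : ℚ ↦ x ^ (2 * k)) / (2 * m).factorial

theorem centralFactorialNum_zero_right {k : ℕ} (hk : 1 ≤ k) : centralFactorialNum k 0 = 0 := by
  simp [centralFactorialNum, centralDiff, zero_pow (by omega : 2 * k ≠ 0)]

theorem centralFactorialNum_eq_zero_of_lt {k m : ℕ} (h : k < m) :
    centralFactorialNum k m = 0 := by
  rw [centralFactorialNum, centralDiff_pow_eq_zero h, zero_div]

theorem centralFactorialNum_one_one : centralFactorialNum 1 1 = 1 := by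
  norm_num [centralFactorialNum, centralDiff, sum_range_succ]

theorem centralFactorialNum_succ_succ (k m : ℕ) :
    centralFactorialNum (k + 1) (m + 1)
      = centralFactorialNum k m + ((m : ℚ) + 1) ^ 2 * centralFactorialNum k (m + 1) := by
  have hpow : (fun x : ℚ ↦ x ^ (2 * (k + 1))) = fun x ↦ x ^ 2 * x ^ (2 * k) := by
    funext x; ring
  have hfac : ((2 * (m + 1)).factorial : ℚ) = (2 * m + 2) * (2 * m + 1) * (2 * m).factorial := by
    rw [show 2 * (m + 1) = 2 * m + 1 + 1 by ring, Nat.factorial_succ, Nat.factorial_succ]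
    push_cast; ring
  rw [centralFactorialNum, centralFactorialNum, centralFactorialNum, hpow, centralDiff_sq_mul,
    hfac]
  field_simp
  ring

/-- `∏_{j = -n}^{n} (X + j)`. -/
noncomputable def symmPochhammer (n : ℕ) : ℚ[X] :=
  X * ∏ i ∈ range n, (X ^ 2 - ((i : ℚ[X]) + 1) ^ 2)

theorem symmPochhammer_zero : symmPochhammer 0 = X := by
  simp [symmPochhammer]

theorem symmPochhammer_succ (n : ℕ) :
    symmPochhammer (n + 1) = symmPochhammer n * (X ^ 2 - ((n : ℚ[X]) + 1) ^ 2) := by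
  rw [symmPochhammer, symmPochhammer, prod_range_succ, mul_assoc]

theorem symmPochhammer_succ_comp_X_add_one (n : ℕ) :
    (symmPochhammer (n + 1)).comp (X + 1)
      = (X + ((n : ℚ[X]) + 1)) * (X + ((n : ℚ[X]) + 2)) * symmPochhammer n := by
  induction n with
  | zero =>
    rw [symmPochhammer_succ, symmPochhammer_zero]
    simp only [Nat.cast_zero, zero_add, mul_comp, sub_comp, pow_comp, X_comp, one_comp]
    ring
  | succ n ih =>
    rw [symmPochhammer_succ, mul_comp, ih, symmPochhammer_succ]
    simp only [Nat.cast_add, Nat.cast_one, sub_comp, pow_comp, X_comp, add_comp, natCast_comp,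
      one_comp]
    ring

theorem symmPochhammer_eq_X_mul_comp_X_sq (n : ℕ) :
    symmPochhammer n = X * (∏ i ∈ range n, (X - ((i : ℚ[X]) + 1) ^ 2)).comp (X ^ 2) := by
  simp [symmPochhammer, Polynomial.prod_comp]

theorem eval_zero_prod_X_sub_sq (n : ℕ) :
    (∏ i ∈ range n, (X - ((i : ℚ[X]) + 1) ^ 2)).eval 0 =
      (-1) ^ n * (n.factorial : ℚ) ^ 2 := by
  induction n with
  | zero => simp
  | succ n ih =>
    rw [prod_range_succ, eval_mul, ih, Nat.factorial_succ]
    simp only [eval_sub, eval_X, eval_pow, eval_add, eval_natCast, eval_one, Nat.cast_mul,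
      Nat.cast_add, Nat.cast_one]
    ring

theorem X_pow_two_mul_eq_sum {k : ℕ} (hk : 1 ≤ k) {K : ℕ} (hK : k ≤ K) :
    (X : ℚ[X]) ^ (2 * k) =
      ∑ n ∈ range K, centralFactorialNum k (n + 1) • (X * symmPochhammer n) := by
  induction k, hk using Nat.le_induction generalizing K with
  | base =>
    rw [sum_eq_single_of_mem 0 (mem_range.mpr hK), centralFactorialNum_one_one, one_smul,
      symmPochhammer_zero]
    · ring
    · intro n _ hn
      rw [centralFactorialNum_eq_zero_of_lt (by omega), zero_smul]
  | succ k hk ih =>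
    have hstep : ∀ n ∈ range K, centralFactorialNum k (n + 1) • (X * symmPochhammer n) * X ^ 2
        = centralFactorialNum k (n + 1) • (X * symmPochhammer (n + 1))
          + (((n : ℚ) + 1) ^ 2 * centralFactorialNum k (n + 1)) • (X * symmPochhammer n) := by
      intro n _
      simp only [symmPochhammer_succ, smul_eq_C_mul, map_mul, map_pow, map_add, map_natCast,
        map_one]
      ring
    have hshift : ∑ n ∈ range K, centralFactorialNum k (n + 1) • (X * symmPochhammer (n + 1))
        = ∑ n ∈ range K, centralFactorialNum k n • (X * symmPochhammer n) := by
      set f : ℕ → ℚ[X] := fun n ↦ centralFactorialNum k n • (X * symmPochhammer n)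
      have hf0 : f 0 = 0 := by simp [f, centralFactorialNum_zero_right hk]
      have hfK : f K = 0 := by simp [f, centralFactorialNum_eq_zero_of_lt (show k < K by omega)]
      calc ∑ n ∈ range K, f (n + 1)
          = ∑ n ∈ range K, f (n + 1) + f 0 := by rw [hf0, add_zero]
        _ = ∑ n ∈ range K, f n + f K := by rw [← sum_range_succ', sum_range_succ]
        _ = ∑ n ∈ range K, f n := by rw [hfK, add_zero]
    rw [show 2 * (k + 1) = 2 * k + 2 by ring, pow_add, ih (K := K) (by omega), sum_mul,
      sum_congr rfl hstep, sum_add_distrib, hshift, ← sum_add_distrib]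
    refine sum_congr rfl fun n _ ↦ ?_
    rw [centralFactorialNum_succ_succ, add_smul]

noncomputable def bernoulliFunctional : ℚ[X] →ₗ[ℚ] ℚ :=
  lsum fun n ↦ LinearMap.smulRight LinearMap.id (bernoulli n)

theorem bernoulliFunctional_monomial (n : ℕ) (a : ℚ) :
    bernoulliFunctional (monomial n a) = a * bernoulli n :=
  sum_monomial_index a _ (zero_mul _)

theorem bernoulliFunctional_X_pow (n : ℕ) : bernoulliFunctional (X ^ n) = bernoulli n := by
  rw [← monomial_one_right_eq_X_pow, bernoulliFunctional_monomial, one_mul]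

theorem bernoulliFunctional_X_add_one_pow (n : ℕ) :
    bernoulliFunctional ((X + 1) ^ n) =
      ∑ j ∈ range (n + 1), (n.choose j : ℚ) * bernoulli j := by
  rw [add_pow, map_sum]
  refine sum_congr rfl fun j _ ↦ ?_
  rw [one_pow, mul_one, ← C_eq_natCast, mul_comm, C_mul_X_pow_eq_monomial,
    bernoulliFunctional_monomial]

theorem bernoulliFunctional_comp_X_add_one (f : ℚ[X]) :
    bernoulliFunctional (f.comp (X + 1)) = bernoulliFunctional f + (derivative f).eval 0 := by
  induction f using Polynomial.induction_on' with
  | add p q hp hq => simp only [add_comp, map_add, hp, hq, eval_add]; ring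
  | monomial n a =>
    rw [← C_mul_X_pow_eq_monomial, mul_comp, C_comp, pow_comp, X_comp, ← smul_eq_C_mul,
      ← smul_eq_C_mul, map_smul, map_smul, bernoulliFunctional_X_add_one_pow, sum_range_succ,
      sum_bernoulli, bernoulliFunctional_X_pow, derivative_smul, derivative_X_pow]
    rcases eq_or_ne n 1 with rfl | hn
    · simp only [↓reduceIte, Nat.choose_self, Nat.cast_one, bernoulli_one, one_mul, smul_eq_mul,
        map_one, tsub_self, pow_zero, mul_one, eval_smul, eval_one]
      ring
    · simp only [hn, ↓reduceIte, Nat.choose_self, Nat.cast_one, one_mul, zero_add, smul_eq_mul,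
        map_natCast, eval_smul, eval_mul, eval_natCast, eval_pow, eval_X, left_eq_add, mul_eq_zero,
        Nat.cast_eq_zero, pow_eq_zero_iff', ne_eq, true_and]
      omega

theorem bernoulliFunctional_X_mul_comp_X_sq (H : ℚ[X]) :
    bernoulliFunctional (X * H.comp (X ^ 2)) = -(1 / 2) * H.eval 0 := by
  induction H using Polynomial.induction_on' with
  | add p q hp hq => rw [add_comp, mul_add, map_add, hp, hq, eval_add]; ring
  | monomial n a =>
    have hmon : X * (monomial n a).comp (X ^ 2) = monomial (2 * n + 1) a := by
      rw [← C_mul_X_pow_eq_monomial, ← C_mul_X_pow_eq_monomial, mul_comp, C_comp, pow_comp,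
        X_comp]
      ring
    rw [hmon, bernoulliFunctional_monomial, eval_monomial]
    rcases Nat.eq_zero_or_pos n with rfl | hn
    · simp only [mul_zero, zero_add, bernoulli_one, pow_zero, mul_one]; ring
    · rw [bernoulli_eq_zero_of_odd (odd_two_mul_add_one n) (by omega), zero_pow hn.ne']
      ring

theorem bernoulliFunctional_symmPochhammer (n : ℕ) :
    bernoulliFunctional (symmPochhammer n) = -(1 / 2) * ((-1) ^ n * (n.factorial : ℚ) ^ 2) := by
  rw [symmPochhammer_eq_X_mul_comp_X_sq, bernoulliFunctional_X_mul_comp_X_sq,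
    eval_zero_prod_X_sub_sq]

theorem derivative_symmPochhammer_eval_zero (n : ℕ) :
    (derivative (symmPochhammer n)).eval 0 = (-1) ^ n * (n.factorial : ℚ) ^ 2 := by
  rw [symmPochhammer_eq_X_mul_comp_X_sq]
  simp [eval_comp, eval_zero_prod_X_sub_sq]

theorem bernoulliFunctional_X_mul_symmPochhammer (n : ℕ) :
    bernoulliFunctional (X * symmPochhammer n)
      = (-1) ^ n * (n + 1).factorial * n.factorial / (2 * (2 * n + 3)) := by
  have hshift := bernoulliFunctional_comp_X_add_one (symmPochhammer (n + 1))
  have hdiff : (X + ((n : ℚ[X]) + 1)) * (X + ((n : ℚ[X]) + 2)) * symmPochhammer n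
      = symmPochhammer (n + 1) + (2 * (n : ℚ) + 3) • (X * symmPochhammer n)
        + ((2 * (n : ℚ) + 3) * (n + 1)) • symmPochhammer n := by
    simp only [symmPochhammer_succ, smul_eq_C_mul, map_mul, map_add, map_natCast, map_ofNat,
      map_one]
    ring
  rw [symmPochhammer_succ_comp_X_add_one, hdiff, map_add, map_add, map_smul, map_smul,
    derivative_symmPochhammer_eval_zero, bernoulliFunctional_symmPochhammer n, smul_eq_mul,
    smul_eq_mul] at hshift
  rw [Nat.factorial_succ]
  push_cast
  field_simp
  rw [pow_succ (-1 : ℚ) n, Nat.factorial_succ] at hshift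
  push_cast at hshift
  linear_combination 2 * hshift

theorem stmt_17 (k : ℕ) (hk : 1 ≤ k) :
    bernoulli (2 * k) =
      ∑ m ∈ Finset.Icc 1 k,
        (-1 : ℚ) ^ (m - 1) *
          ((Nat.factorial m : ℚ) * (Nat.factorial (m - 1) : ℚ) /
            (Nat.factorial (2 * m + 1) : ℚ)) * (R k m : ℚ) := by
  rw [← bernoulliFunctional_X_pow, X_pow_two_mul_eq_sum hk le_rfl, map_sum,
    ← Ico_add_one_right_eq_Icc, sum_Ico_eq_sum_range, Nat.add_sub_cancel]
  refine sum_congr rfl fun n _ ↦ ?_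
  rw [map_smul, smul_eq_mul, bernoulliFunctional_X_mul_symmPochhammer, centralFactorialNum,
    centralDiff_pow_eq_two_mul_R hk, add_comm 1 n, Nat.add_sub_cancel,
    show 2 * (n + 1) + 1 = 2 * n + 3 by ring, show 2 * (n + 1) = 2 * n + 2 by ring,
    Nat.factorial_succ (2 * n + 2)]
  push_cast
  field_simp
  ring
end
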